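/- Suppose e₁, e₂, k̃, l̃, w̃ : ℝ → ℝ are differentiable at t and satisfy de₁/dt = −a_m·e₁ + L·e₂, de₂/dt = −(a_m + L)·e₂ + b·l̃·r − b·k̃·x + b·(k̃ + k*)·θ·e₂ + b·w̃, dk̃/dt = sgn(b)·((1 − θ)·x + θ·(x − e₂))·γ₁·m₂·e₂, dl̃/dt = −sgn(b)·r·γ₂·m₂·e₂, dw̃/dt = −sgn(b)·γ₃·m₂·e₂ at time t (for given values L, x, r, θ at time t), where b·k* = a + a_m. If moreover there exist δ₂ > 0 and δ̂₂ := a_m·m₁ − δ₂ > 0 such that 0 < L and δ̂₂·((L + a_m − θ·(a + a_m))·m₂ − δ₂) − L²·m₁²/4 > 0, then the derivative of V(t) := ½·m₁·e₁(t)² + ½·m₂·e₂(t)² + (|b|/(2γ₁))·k̃(t)² + (|b|/(2γ₂))·l̃(t)² + (|b|/(2γ₃))·w̃(t)² at t satisfies dV/dt(t) ≤ −δ₂·(e₁(t)² + e₂(t)²). -/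

import Mathlib

/-!
Differentiating `V` along the error dynamics, each adaptation law makes its term
`(|b|/γ) k̃ k̃'` equal to `b k̃ φ m₂ e₂` (as `|b| sgn b = b`), cancelling the matching
parameter-error term of `m₂ e₂ ė₂`; with `b k* = a + aₘ` only
`V̇ = -aₘ m₁ e₁² + L m₁ e₁ e₂ - (L + aₘ - θ (a + aₘ)) m₂ e₂²` survives. The margin conditions
say that `-V̇ - δ₂ (e₁² + e₂²)` is a quadratic form with positive leading coefficient and
positive determinant, hence nonnegative.
-/

theorem Real.abs_mul_sign (b : ℝ) : |b| * Real.sign b = b := by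
  rcases lt_trichotomy b 0 with hb | rfl | hb
  · rw [abs_of_neg hb, Real.sign_of_neg hb]; ring
  · simp
  · rw [abs_of_pos hb, Real.sign_of_pos hb]; ring

theorem HasDerivAt.const_mul_sq {f : ℝ → ℝ} {f' t : ℝ} (c : ℝ) (hf : HasDerivAt f f' t) :
    HasDerivAt (fun s => c * f s ^ 2) (2 * c * f t * f') t :=
  ((hf.fun_pow 2).const_mul c).congr_deriv (by push_cast; ring)

theorem quadratic_form_nonneg {p β q : ℝ} (hp : 0 < p) (hdisc : β ^ 2 ≤ 4 * p * q) (x y : ℝ) :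
    0 ≤ p * x ^ 2 + β * x * y + q * y ^ 2 := by
  have h4p : 0 ≤ 4 * p * (p * x ^ 2 + β * x * y + q * y ^ 2) := by
    have hsq : 4 * p * (p * x ^ 2 + β * x * y + q * y ^ 2)
        = (2 * p * x + β * y) ^ 2 + (4 * p * q - β ^ 2) * y ^ 2 := by ring
    rw [hsq]
    exact add_nonneg (sq_nonneg _) (mul_nonneg (sub_nonneg.2 hdisc) (sq_nonneg y))
  exact nonneg_of_mul_nonneg_right h4p (by positivity)

theorem stmt_17_general
    (a aₘ b kstar m₁ m₂ γ₁ γ₂ γ₃ L x r θ δ₂ t : ℝ)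
    (e₁ e₂ kt lt wt : ℝ → ℝ)
    (hγ₁ : 0 < γ₁) (hγ₂ : 0 < γ₂) (hγ₃ : 0 < γ₃)
    (hmatch : b * kstar = a + aₘ)
    (hd1 : HasDerivAt e₁ (-aₘ * e₁ t + L * e₂ t) t)
    (hd2 : HasDerivAt e₂
      (-(aₘ + L) * e₂ t + b * lt t * r - b * kt t * x
        + b * (kt t + kstar) * θ * e₂ t + b * wt t) t)
    (hd3 : HasDerivAt kt
      (Real.sign b * ((1 - θ) * x + θ * (x - e₂ t)) * γ₁ * m₂ * e₂ t) t)
    (hd4 : HasDerivAt lt (-(Real.sign b) * r * γ₂ * m₂ * e₂ t) t)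
    (hd5 : HasDerivAt wt (-(Real.sign b) * γ₃ * m₂ * e₂ t) t)
    (hδhat₂ : 0 < aₘ * m₁ - δ₂)
    (hminor : 0 < (aₘ * m₁ - δ₂) * ((L + aₘ - θ * (a + aₘ)) * m₂ - δ₂)
        - L ^ 2 * m₁ ^ 2 / 4) :
    deriv (fun s => (1/2) * m₁ * (e₁ s) ^ 2 + (1/2) * m₂ * (e₂ s) ^ 2
        + (|b| / (2 * γ₁)) * (kt s) ^ 2 + (|b| / (2 * γ₂)) * (lt s) ^ 2
        + (|b| / (2 * γ₃)) * (wt s) ^ 2) t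
      ≤ -δ₂ * ((e₁ t) ^ 2 + (e₂ t) ^ 2) := by
  have hV := ((((hd1.const_mul_sq ((1/2) * m₁)).add (hd2.const_mul_sq ((1/2) * m₂))).add
    (hd3.const_mul_sq (|b| / (2 * γ₁)))).add (hd4.const_mul_sq (|b| / (2 * γ₂)))).add
    (hd5.const_mul_sq (|b| / (2 * γ₃)))
  refine hV.deriv.trans_le ?_
  have hsign := Real.abs_mul_sign b
  have hV_eq : 2 * ((1/2) * m₁) * e₁ t * (-aₘ * e₁ t + L * e₂ t)
      + 2 * ((1/2) * m₂) * e₂ t * (-(aₘ + L) * e₂ t + b * lt t * r - b * kt t * x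
        + b * (kt t + kstar) * θ * e₂ t + b * wt t)
      + 2 * (|b| / (2 * γ₁)) * kt t
        * (Real.sign b * ((1 - θ) * x + θ * (x - e₂ t)) * γ₁ * m₂ * e₂ t)
      + 2 * (|b| / (2 * γ₂)) * lt t * (-(Real.sign b) * r * γ₂ * m₂ * e₂ t)
      + 2 * (|b| / (2 * γ₃)) * wt t * (-(Real.sign b) * γ₃ * m₂ * e₂ t)
      = -aₘ * m₁ * e₁ t ^ 2 + L * m₁ * e₁ t * e₂ t
        - (L + aₘ - θ * (a + aₘ)) * m₂ * e₂ t ^ 2 := by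
    field_simp
    linear_combination (θ * m₂ * e₂ t ^ 2) * hmatch
      + (m₂ * e₂ t * (kt t * (x - θ * e₂ t) - lt t * r - wt t)) * hsign
  rw [hV_eq]
  have hQ := quadratic_form_nonneg hδhat₂ (β := -(L * m₁))
    (q := (L + aₘ - θ * (a + aₘ)) * m₂ - δ₂) (by linarith) (e₁ t) (e₂ t)
  linarith

/-- Lyapunov decrease (blended case).
With the blended error dynamics and adaptation laws holding at `t`,
`b·k* = a + a_m`, and the margin and gain conditions satisfied,
`dV/dt(t) ≤ −δ₂·(e₁(t)² + e₂(t)²)`. -/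
theorem stmt_17
    (a aₘ b kstar m₁ m₂ γ₁ γ₂ γ₃ L x r θ δ₂ t : ℝ)
    (e₁ e₂ kt lt wt : ℝ → ℝ)
    (ham : 0 < aₘ) (hb : b ≠ 0)
    (hm₁ : 0 < m₁) (hm₂ : 0 < m₂)
    (hγ₁ : 0 < γ₁) (hγ₂ : 0 < γ₂) (hγ₃ : 0 < γ₃)
    (hmatch : b * kstar = a + aₘ)
    (hd1 : HasDerivAt e₁ (-aₘ * e₁ t + L * e₂ t) t)
    (hd2 : HasDerivAt e₂
      (-(aₘ + L) * e₂ t + b * lt t * r - b * kt t * x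
        + b * (kt t + kstar) * θ * e₂ t + b * wt t) t)
    (hd3 : HasDerivAt kt
      (Real.sign b * ((1 - θ) * x + θ * (x - e₂ t)) * γ₁ * m₂ * e₂ t) t)
    (hd4 : HasDerivAt lt (-(Real.sign b) * r * γ₂ * m₂ * e₂ t) t)
    (hd5 : HasDerivAt wt (-(Real.sign b) * γ₃ * m₂ * e₂ t) t)
    (hδ₂ : 0 < δ₂)
    (hδhat₂ : 0 < aₘ * m₁ - δ₂)
    (hL0 : 0 < L)
    (hminor : 0 < (aₘ * m₁ - δ₂) * ((L + aₘ - θ * (a + aₘ)) * m₂ - δ₂)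
        - L ^ 2 * m₁ ^ 2 / 4) :
    deriv (fun s => (1/2) * m₁ * (e₁ s) ^ 2 + (1/2) * m₂ * (e₂ s) ^ 2
        + (|b| / (2 * γ₁)) * (kt s) ^ 2 + (|b| / (2 * γ₂)) * (lt s) ^ 2
        + (|b| / (2 * γ₃)) * (wt s) ^ 2) t
      ≤ -δ₂ * ((e₁ t) ^ 2 + (e₂ t) ^ 2) :=
  stmt_17_general a aₘ b kstar m₁ m₂ γ₁ γ₂ γ₃ L x r θ δ₂ t e₁ e₂ kt lt wt hγ₁ hγ₂ hγ₃ hmatch hd1 hd2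
    hd3 hd4 hd5 hδhat₂ hminor
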